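/- arXiv:2010.05673 — 2 statements merged into one kernel-verified Lean document; each statement's English description precedes it below -/
import Mathlib

section
/- Let S, A be finite, γ ∈ (0,1), and let P and P̄ be transition kernels on S×A (each row a probability distribution on S). Suppose P̄ satisfies the anchor-state assumption: P̄(·|s,a) = Σ_{k∈K} λ_k^{s,a} P̄(·|s_k,a_k) with λ_k^{s,a} ≥ 0 and Σ_{k∈K} λ_k^{s,a} = 1, and suppose Σ_{s'} |P(s'|s,a) − P̄(s'|s,a)| ≤ ξ for every (s,a). Then for every V : S → [0, 1/(1−γ)] and every (s,a), Σ_{k∈K} λ_k^{s,a} √(Var_{s_k,a_k}(V)) ≤ √(Var_{s,a}(V)) + 2√(3ξ/(1−γ)²), where Var is taken with respect to the kernel P. -/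
/-- A transition kernel: each row `P s a ·` is a probability distribution on `S`. -/
def IsKernel {S A : Type*} [Fintype S] (P : S → A → S → ℝ) : Prop :=
  (∀ s a s', 0 ≤ P s a s') ∧ ∀ s a, ∑ s', P s a s' = 1

/-- Variance of `V` under the distribution `p`. -/
noncomputable def VarDist {S : Type*} [Fintype S] (p : S → ℝ) (V : S → ℝ) : ℝ :=
  (∑ s', p s' * V s' ^ 2) - (∑ s', p s' * V s') ^ 2

/-!
The variance `VarDist p V` is concave in `p` (a linear function of `p` minus the square of
another one), so Jensen's inequality for the variance and for `√` turns the anchor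
representation `P̄(s,a) = ∑ₖ λₖ P̄(sₖ,aₖ)` into `∑ₖ λₖ √Var_{P̄(sₖ,aₖ)} ≤ √Var_{P̄(s,a)}`.
Replacing `P̄` by `P`, before and after, costs `√(3ξM²)` each time, `M = 1/(1-γ)`: an
`ℓ¹`-perturbation of size `ξ` moves the second moment of `V` by at most `ξM²` and the squared
mean by at most `2ξM²`.
-/

open Finset Real

lemma sqrt_le_sqrt_add_sqrt {x a b : ℝ} (ha : 0 ≤ a) (hb : 0 ≤ b) (h : x ≤ a + b) :
    √x ≤ √a + √b := by
  rw [sqrt_le_left (by positivity)]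
  nlinarith [sq_sqrt ha, sq_sqrt hb, sqrt_nonneg a, sqrt_nonneg b]

lemma sum_mul_sqrt_le_sqrt_sum_mul {K : Type*} [Fintype K] {w x : K → ℝ}
    (hw : ∀ k, 0 ≤ w k) (hw1 : ∑ k, w k = 1) (hx : ∀ k, 0 ≤ x k) :
    ∑ k, w k * √(x k) ≤ √(∑ k, w k * x k) :=
  strictConcaveOn_sqrt.concaveOn.le_map_sum (fun k _ => hw k) hw1 fun k _ => hx k

section VarDist

variable {S : Type*} [Fintype S]

lemma varDist_eq_sum_mul_sq_sub_mean {p : S → ℝ} (hp1 : ∑ s, p s = 1) (V : S → ℝ) :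
    VarDist p V = ∑ s, p s * (V s - ∑ t, p t * V t) ^ 2 := by
  have expand : ∀ s, p s * (V s - ∑ t, p t * V t) ^ 2 =
      p s * V s ^ 2 - 2 * (∑ t, p t * V t) * (p s * V s) + (∑ t, p t * V t) ^ 2 * p s :=
    fun s => by ring
  simp only [expand, sum_add_distrib, sum_sub_distrib, ← mul_sum, hp1, VarDist]
  ring

lemma varDist_nonneg {p : S → ℝ} (hp : ∀ s, 0 ≤ p s) (hp1 : ∑ s, p s = 1) (V : S → ℝ) :
    0 ≤ VarDist p V := by
  rw [varDist_eq_sum_mul_sq_sub_mean hp1]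
  exact sum_nonneg fun s _ => mul_nonneg (hp s) (sq_nonneg _)

lemma concaveOn_varDist (V : S → ℝ) : ConcaveOn ℝ Set.univ fun p : S → ℝ => VarDist p V := by
  have hlin : ∀ f : S → ℝ, ConcaveOn ℝ Set.univ fun p : S → ℝ => ∑ s, p s * f s := fun f =>
    (Fintype.linearCombination ℝ f).concaveOn convex_univ
  have hsq : ConvexOn ℝ Set.univ fun p : S → ℝ => (∑ s, p s * V s) ^ 2 :=
    (even_two.convexOn_pow (𝕜 := ℝ)).comp_linearMap (Fintype.linearCombination ℝ V)
  exact (hlin fun s => V s ^ 2).sub hsq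

lemma abs_sum_mul_sub_sum_mul_le {p q f : S → ℝ} {c : ℝ} (hf : ∀ s, |f s| ≤ c) :
    |∑ s, p s * f s - ∑ s, q s * f s| ≤ (∑ s, |p s - q s|) * c :=
  calc |∑ s, p s * f s - ∑ s, q s * f s| = |∑ s, (p s - q s) * f s| := by
        simp only [sub_mul, sum_sub_distrib]
    _ ≤ ∑ s, |(p s - q s) * f s| := abs_sum_le_sum_abs _ _
    _ ≤ ∑ s, |p s - q s| * c := sum_le_sum fun s _ => by
        rw [abs_mul]; exact mul_le_mul_of_nonneg_left (hf s) (abs_nonneg _)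
    _ = (∑ s, |p s - q s|) * c := (sum_mul _ _ _).symm

lemma sum_mul_mem_Icc {p V : S → ℝ} {M : ℝ} (hp : ∀ s, 0 ≤ p s) (hp1 : ∑ s, p s = 1)
    (hV : ∀ s, V s ∈ Set.Icc 0 M) : ∑ s, p s * V s ∈ Set.Icc 0 M := by
  refine ⟨sum_nonneg fun s _ => mul_nonneg (hp s) (hV s).1, ?_⟩
  calc ∑ s, p s * V s ≤ ∑ s, p s * M := sum_le_sum fun s _ =>
        mul_le_mul_of_nonneg_left (hV s).2 (hp s)
    _ = M := by rw [← sum_mul, hp1, one_mul]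

lemma varDist_le_varDist_add {p q V : S → ℝ} {ξ M : ℝ}
    (hp : ∀ s, 0 ≤ p s) (hp1 : ∑ s, p s = 1) (hq : ∀ s, 0 ≤ q s) (hq1 : ∑ s, q s = 1)
    (hV : ∀ s, V s ∈ Set.Icc 0 M) (hpq : ∑ s, |p s - q s| ≤ ξ) :
    VarDist p V ≤ VarDist q V + 3 * ξ * M ^ 2 := by
  obtain ⟨hA0, hAM⟩ := sum_mul_mem_Icc hp hp1 hV
  obtain ⟨hB0, hBM⟩ := sum_mul_mem_Icc hq hq1 hV
  set A := ∑ s, p s * V s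
  set B := ∑ s, q s * V s
  have hM : 0 ≤ M := hA0.trans hAM
  have hξ : 0 ≤ ξ := (sum_nonneg fun s _ => abs_nonneg _).trans hpq
  have hsecond : ∑ s, p s * V s ^ 2 - ∑ s, q s * V s ^ 2 ≤ ξ * M ^ 2 := by
    refine (le_abs_self _).trans <| (abs_sum_mul_sub_sum_mul_le fun s => ?_).trans <|
      mul_le_mul_of_nonneg_right hpq (sq_nonneg M)
    rw [abs_of_nonneg (sq_nonneg _)]
    exact pow_le_pow_left₀ (hV s).1 (hV s).2 2
  have hmean : |A - B| ≤ ξ * M :=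
    (abs_sum_mul_sub_sum_mul_le fun s => abs_le.mpr ⟨by linarith [(hV s).1], (hV s).2⟩).trans
      (mul_le_mul_of_nonneg_right hpq hM)
  have hsq_means : B ^ 2 - A ^ 2 ≤ 2 * ξ * M ^ 2 := by
    have hBA : B - A ≤ ξ * M := by linarith [(abs_le.mp hmean).1]
    nlinarith [mul_le_mul_of_nonneg_right hBA (add_nonneg hA0 hB0),
      mul_nonneg (mul_nonneg hξ hM) (by linarith : 0 ≤ 2 * M - (A + B))]
  unfold VarDist
  linarith

lemma sqrt_varDist_le_sqrt_varDist_add {p q V : S → ℝ} {ξ M : ℝ}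
    (hp : ∀ s, 0 ≤ p s) (hp1 : ∑ s, p s = 1) (hq : ∀ s, 0 ≤ q s) (hq1 : ∑ s, q s = 1)
    (hV : ∀ s, V s ∈ Set.Icc 0 M) (hpq : ∑ s, |p s - q s| ≤ ξ) :
    √(VarDist p V) ≤ √(VarDist q V) + √(3 * ξ * M ^ 2) := by
  have hξ : 0 ≤ ξ := (sum_nonneg fun s _ => abs_nonneg _).trans hpq
  exact sqrt_le_sqrt_add_sqrt (varDist_nonneg hq hq1 V) (by positivity)
    (varDist_le_varDist_add hp hp1 hq hq1 hV hpq)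

lemma sum_mul_varDist_le_varDist_of_eq_sum {K : Type*} [Fintype K] {w : K → ℝ}
    {q : K → S → ℝ} {p : S → ℝ} (hw : ∀ k, 0 ≤ w k) (hw1 : ∑ k, w k = 1)
    (hp : ∀ s, p s = ∑ k, w k * q k s) (V : S → ℝ) :
    ∑ k, w k * VarDist (q k) V ≤ VarDist p V := by
  have hmix : p = ∑ k, w k • q k := funext fun s => by simp [hp, Finset.sum_apply]
  rw [hmix]
  exact (concaveOn_varDist V).le_map_sum (fun k _ => hw k) hw1 fun _ _ => Set.mem_univ _

end VarDist

theorem stmt12_general {S A K : Type*} [Fintype S] [Fintype A] [Fintype K]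
    (γ ξ : ℝ)
    (P Pbar : S → A → S → ℝ) (hP : IsKernel P) (hPbar : IsKernel Pbar)
    (anchor : K → S × A) (lam : S → A → K → ℝ)
    (hnn : ∀ s a k, 0 ≤ lam s a k) (hsum : ∀ s a, ∑ k, lam s a k = 1)
    (hrep : ∀ s a s', Pbar s a s' = ∑ k, lam s a k * Pbar (anchor k).1 (anchor k).2 s')
    (hξ : ∀ s a, ∑ s', |P s a s' - Pbar s a s'| ≤ ξ)
    (V : S → ℝ) (hV : ∀ s', V s' ∈ Set.Icc (0 : ℝ) (1 / (1 - γ)))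
    (s : S) (a : A) :
    ∑ k, lam s a k * Real.sqrt (VarDist (P (anchor k).1 (anchor k).2) V) ≤
      Real.sqrt (VarDist (P s a) V) + 2 * Real.sqrt (3 * ξ / (1 - γ) ^ 2) := by
  obtain ⟨hP0, hP1⟩ := hP
  obtain ⟨hPbar0, hPbar1⟩ := hPbar
  rw [show 3 * ξ / (1 - γ) ^ 2 = 3 * ξ * (1 / (1 - γ)) ^ 2 by
    rw [one_div, inv_pow, div_eq_mul_inv]]
  set c := √(3 * ξ * (1 / (1 - γ)) ^ 2)
  have hP_le t b : √(VarDist (P t b) V) ≤ √(VarDist (Pbar t b) V) + c :=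
    sqrt_varDist_le_sqrt_varDist_add (hP0 t b) (hP1 t b) (hPbar0 t b) (hPbar1 t b) hV
      (hξ t b)
  have hPbar_le : √(VarDist (Pbar s a) V) ≤ √(VarDist (P s a) V) + c := by
    refine sqrt_varDist_le_sqrt_varDist_add (hPbar0 s a) (hPbar1 s a) (hP0 s a) (hP1 s a) hV ?_
    simpa only [abs_sub_comm] using hξ s a
  have hmix := sum_mul_varDist_le_varDist_of_eq_sum (hnn s a) (hsum s a) (hrep s a) V
  calc ∑ k, lam s a k * √(VarDist (P (anchor k).1 (anchor k).2) V)
      ≤ ∑ k, lam s a k * (√(VarDist (Pbar (anchor k).1 (anchor k).2) V) + c) :=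
        sum_le_sum fun k _ => mul_le_mul_of_nonneg_left (hP_le _ _) (hnn s a k)
    _ = ∑ k, lam s a k * √(VarDist (Pbar (anchor k).1 (anchor k).2) V) + c := by
        simp only [mul_add, sum_add_distrib, ← sum_mul, hsum s a, one_mul]
    _ ≤ √(∑ k, lam s a k * VarDist (Pbar (anchor k).1 (anchor k).2) V) + c := by
        gcongr
        exact sum_mul_sqrt_le_sqrt_sum_mul (hnn s a) (hsum s a)
          fun k => varDist_nonneg (hPbar0 _ _) (hPbar1 _ _) V
    _ ≤ √(VarDist (Pbar s a) V) + c := by gcongr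
    _ ≤ √(VarDist (P s a) V) + 2 * c := by linarith

theorem stmt12 {S A K : Type*} [Fintype S] [Fintype A] [Fintype K]
    (γ ξ : ℝ) (hγ0 : 0 < γ) (hγ1 : γ < 1)
    (P Pbar : S → A → S → ℝ) (hP : IsKernel P) (hPbar : IsKernel Pbar)
    (anchor : K → S × A) (lam : S → A → K → ℝ)
    (hnn : ∀ s a k, 0 ≤ lam s a k) (hsum : ∀ s a, ∑ k, lam s a k = 1)
    (hrep : ∀ s a s', Pbar s a s' = ∑ k, lam s a k * Pbar (anchor k).1 (anchor k).2 s')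
    (hξ : ∀ s a, ∑ s', |P s a s' - Pbar s a s'| ≤ ξ)
    (V : S → ℝ) (hV : ∀ s', V s' ∈ Set.Icc (0 : ℝ) (1 / (1 - γ)))
    (s : S) (a : A) :
    ∑ k, lam s a k * Real.sqrt (VarDist (P (anchor k).1 (anchor k).2) V) ≤
      Real.sqrt (VarDist (P s a) V) + 2 * Real.sqrt (3 * ξ / (1 - γ) ^ 2) :=
  stmt12_general γ ξ P Pbar hP hPbar anchor lam hnn hsum hrep hξ V hV s a
end

section
/- Let S, A be finite, r : S×A → [0,1], and let P̃_K be a matrix indexed by K×S whose rows are probability distributions on S. Suppose coefficients λ_k^{s,a} satisfy Σ_{k∈K} |λ_k^{s,a}| ≤ L for all (s,a), with L ≥ 1, and set P̃(·|s,a) = Σ_{k∈K} λ_k^{s,a} P̃_K(·|s_k,a_k). Let w ∈ ℝ^{S×A} with ‖w‖_∞ ≤ 1. For u = (u_0,…,u_{H−1}) ∈ ℝ^H, define the backward sequences Q̃_{H,u}* = 0, Q̃_{h,u}*(s,a) = r(s,a) + u_h w(s,a) + Σ_{s'} P̃(s'|s,a) Ṽ_{h+1,u}*(s'), Ṽ_{h,u}*(s)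 = max_a Q̃_{h,u}*(s,a). Then for all u, u' ∈ ℝ^H and all h ∈ {0,…,H−1}: ‖Q̃_{h,u}* − Q̃_{h,u'}*‖_∞ ≤ (H−h)·L^{H−h}·‖u − u'‖_∞. -/
/-- The kernel built from anchor rows `PK` by linear combination with coefficients `lam`. -/
noncomputable def kernelOf {S A K : Type*} [Fintype K]
    (lam : S → A → K → ℝ) (PK : K → S → ℝ) : S → A → S → ℝ :=
  fun s a s' => ∑ k, lam s a k * PK k s'

/-- Extend a vector `u ∈ ℝ^H` to all of `ℕ` by zero. -/
noncomputable def uExt {H : ℕ} (u : Fin H → ℝ) : ℕ → ℝ :=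
  fun h => if hh : h < H then u ⟨h, hh⟩ else 0

/-- Undiscounted backward value recursion with (possibly signed) kernel `Pt`, reward
`r + u_h w`: `VIu Pt r w u t h` is the optimal value at step `h` with `t` steps remaining:
`Ṽ_{h}*(s) = max_a (r(s,a) + u_h w(s,a) + Σ_{s'} Pt(s'|s,a) Ṽ_{h+1}*(s'))`, zero when no
steps remain. -/
noncomputable def VIu {S A : Type*} [Fintype S] [Fintype A]
    (Pt : S → A → S → ℝ) (r : S → A → ℝ) (w : S → A → ℝ) (u : ℕ → ℝ) : ℕ → ℕ → S → ℝ
  | 0, _ => fun _ => 0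
  | t + 1, h => fun s =>
      ⨆ a : A, (r s a + u h * w s a + ∑ s', Pt s a s' * VIu Pt r w u t (h + 1) s')

/-- `Q̃_{h,u}*(s,a) = r(s,a) + u_h w(s,a) + Σ_{s'} Pt(s'|s,a) Ṽ_{h+1,u}*(s')` with
horizon `H`. -/
noncomputable def QIu {S A : Type*} [Fintype S] [Fintype A]
    (Pt : S → A → S → ℝ) (r : S → A → ℝ) (w : S → A → ℝ) (u : ℕ → ℝ) (H h : ℕ) :
    S → A → ℝ :=
  fun s a => r s a + u h * w s a + ∑ s', Pt s a s' * VIu Pt r w u (H - (h + 1)) (h + 1) s'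

/-!
The payoff `u` enters each Bellman backup linearly with weight `w`, `‖w‖_∞ ≤ 1`, so one
backup changes by at most `‖u - u'‖_∞` plus the change of the next-step values propagated
through the signed kernel. Each row of `P̃ = Σ_k λ_k P̃_K(·|s_k,a_k)` has `ℓ¹`-norm at most
`Σ_k |λ_k| ≤ L`, so that propagation multiplies the error by at most `L`. Unrolling
`e_{t+1} ≤ D + L e_t` with `L ≥ 1` gives `e_t ≤ t L^t D` after `t` steps; the maximum over
actions in `Ṽ` is `1`-Lipschitz in the sup norm and does not spoil the bound.
-/

open Finset

lemma abs_sum_mul_le_sum_abs_mul {ι : Type*} (s : Finset ι) (p x : ι → ℝ) {M : ℝ}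
    (hx : ∀ i ∈ s, |x i| ≤ M) :
    |∑ i ∈ s, p i * x i| ≤ (∑ i ∈ s, |p i|) * M := by
  rw [sum_mul]
  refine (abs_sum_le_sum_abs _ _).trans (sum_le_sum fun i hi => ?_)
  rw [abs_mul]
  exact mul_le_mul_of_nonneg_left (hx i hi) (abs_nonneg _)

lemma sum_abs_kernelOf_le {S A K : Type*} [Fintype S] [Fintype K]
    (lam : S → A → K → ℝ) (PK : K → S → ℝ) (hPK : ∀ k s', 0 ≤ PK k s')
    (hPK_sum : ∀ k, ∑ s', PK k s' = 1) (s : S) (a : A) :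
    ∑ s', |kernelOf lam PK s a s'| ≤ ∑ k, |lam s a k| :=
  calc ∑ s', |kernelOf lam PK s a s'|
      ≤ ∑ s', ∑ k, |lam s a k| * PK k s' := by
        refine sum_le_sum fun s' _ => (abs_sum_le_sum_abs _ _).trans_eq ?_
        simp only [abs_mul, abs_of_nonneg (hPK _ s')]
    _ = ∑ k, |lam s a k| := by
        rw [sum_comm]
        simp only [← mul_sum, hPK_sum, mul_one]

lemma abs_ciSup_sub_ciSup_le {ι : Type*} [Finite ι] [Nonempty ι] (f g : ι → ℝ) {M : ℝ}
    (hfg : ∀ i, |f i - g i| ≤ M) :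
    |(⨆ i, f i) - ⨆ i, g i| ≤ M := by
  rw [abs_sub_le_iff, sub_le_iff_le_add, sub_le_iff_le_add]
  constructor
  · refine ciSup_le fun i => ?_
    linarith [(abs_le.mp (hfg i)).2, le_ciSup (Set.finite_range g).bddAbove i]
  · refine ciSup_le fun i => ?_
    linarith [(abs_le.mp (hfg i)).1, le_ciSup (Set.finite_range f).bddAbove i]

lemma abs_uExt_sub_uExt_le {H : ℕ} (u u' : Fin H → ℝ) (h : ℕ) :
    |uExt u h - uExt u' h| ≤ ‖u - u'‖ := by
  unfold uExt
  split_ifs with hh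
  · simpa only [Pi.sub_apply, Real.norm_eq_abs] using norm_le_pi_norm (u - u') ⟨h, hh⟩
  · simp

lemma add_mul_mul_pow_le {L D : ℝ} (hL : 1 ≤ L) (hD : 0 ≤ D) (t : ℕ) :
    D + L * (t * L ^ t * D) ≤ ((t + 1 : ℕ) : ℝ) * L ^ (t + 1) * D := by
  have hD_le : D ≤ L ^ (t + 1) * D := le_mul_of_one_le_left hD (one_le_pow₀ hL)
  push_cast
  linarith [show L * (t * L ^ t * D) = t * (L ^ (t + 1) * D) by ring]

section Bellman

variable {S A : Type*} [Fintype S] [Fintype A]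
  {Pt : S → A → S → ℝ} {r w : S → A → ℝ} {u u' : ℕ → ℝ} {L D : ℝ}

lemma VIu_succ (t h : ℕ) (s : S) :
    VIu Pt r w u (t + 1) h s = ⨆ a, QIu Pt r w u (h + 1 + t) h s a := by
  simp only [VIu, QIu, Nat.add_sub_cancel_left]

lemma abs_QIu_sub_QIu_le (hPt : ∀ s a, ∑ s', |Pt s a s'| ≤ L) (hw : ∀ s a, |w s a| ≤ 1)
    (hu : ∀ h, |u h - u' h| ≤ D) {H h : ℕ} {M : ℝ} (hM : 0 ≤ M)
    (hV : ∀ s', |VIu Pt r w u (H - (h + 1)) (h + 1) s' -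
      VIu Pt r w u' (H - (h + 1)) (h + 1) s'| ≤ M) (s : S) (a : A) :
    |QIu Pt r w u H h s a - QIu Pt r w u' H h s a| ≤ D + L * M := by
  have hsplit : QIu Pt r w u H h s a - QIu Pt r w u' H h s a =
      (u h - u' h) * w s a + ∑ s', Pt s a s' *
        (VIu Pt r w u (H - (h + 1)) (h + 1) s' - VIu Pt r w u' (H - (h + 1)) (h + 1) s') := by
    simp only [QIu, mul_sub, sum_sub_distrib]
    ring
  have hreward : |(u h - u' h) * w s a| ≤ D := by
    rw [abs_mul]
    exact (mul_le_of_le_one_right (abs_nonneg _) (hw s a)).trans (hu h)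
  have hnext := abs_sum_mul_le_sum_abs_mul univ (Pt s a) _ fun s' _ => hV s'
  rw [hsplit]
  exact (abs_add_le _ _).trans
    (add_le_add hreward (hnext.trans (mul_le_mul_of_nonneg_right (hPt s a) hM)))

variable [Nonempty A]

lemma abs_VIu_sub_VIu_le (hPt : ∀ s a, ∑ s', |Pt s a s'| ≤ L) (hw : ∀ s a, |w s a| ≤ 1)
    (hu : ∀ h, |u h - u' h| ≤ D) (hL : 1 ≤ L) (hD : 0 ≤ D) (t h : ℕ) (s : S) :
    |VIu Pt r w u t h s - VIu Pt r w u' t h s| ≤ t * L ^ t * D := by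
  induction t generalizing h s with
  | zero => simp [VIu]
  | succ t ih =>
    have hM : (0 : ℝ) ≤ t * L ^ t * D := by
      have : (0 : ℝ) ≤ L := zero_le_one.trans hL
      positivity
    rw [VIu_succ, VIu_succ]
    refine abs_ciSup_sub_ciSup_le _ _ fun a => ?_
    refine (abs_QIu_sub_QIu_le hPt hw hu hM (fun s' => ?_) s a).trans (add_mul_mul_pow_le hL hD t)
    simpa only [Nat.add_sub_cancel_left] using ih (h + 1) s'

end Bellman

theorem stmt19_general {S A K : Type*} [Fintype S] [Fintype A] [Fintype K]
    [Nonempty A]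
    (r : S → A → ℝ)
    (L : ℝ) (hL : 1 ≤ L) (H : ℕ)
    (lam : S → A → K → ℝ)
    (hL1 : ∀ s a, ∑ k, |lam s a k| ≤ L)
    (PtK : K → S → ℝ)
    (hKnn : ∀ k s', 0 ≤ PtK k s') (hKsum : ∀ k, ∑ s', PtK k s' = 1)
    (w : S → A → ℝ) (hw : ∀ s a, |w s a| ≤ 1)
    (u u' : Fin H → ℝ) (h : ℕ) (hh : h < H) :
    ‖(fun x : S × A =>
        QIu (kernelOf lam PtK) r w (uExt u) H h x.1 x.2 -
          QIu (kernelOf lam PtK) r w (uExt u') H h x.1 x.2)‖ ≤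
      ((H - h : ℕ) : ℝ) * L ^ (H - h) * ‖u - u'‖ := by
  have hPt s a := (sum_abs_kernelOf_le lam PtK hKnn hKsum s a).trans (hL1 s a)
  have hu := abs_uExt_sub_uExt_le u u'
  have hD := norm_nonneg (u - u')
  obtain ⟨t, ht⟩ : ∃ t, H - h = t + 1 := ⟨H - (h + 1), by omega⟩
  have hV := abs_VIu_sub_VIu_le (r := r) hPt hw hu hL hD (H - (h + 1)) (h + 1)
  refine (pi_norm_le_iff_of_nonneg (by positivity)).mpr fun x => ?_
  rw [Real.norm_eq_abs, ht]
  refine (abs_QIu_sub_QIu_le hPt hw hu (by positivity) hV x.1 x.2).trans ?_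
  simpa only [show H - (h + 1) = t by omega] using add_mul_mul_pow_le hL hD t

theorem stmt19 {S A K : Type*} [Fintype S] [Fintype A] [Fintype K]
    [Nonempty S] [Nonempty A]
    (r : S → A → ℝ) (hr : ∀ s a, 0 ≤ r s a ∧ r s a ≤ 1)
    (L : ℝ) (hL : 1 ≤ L) (H : ℕ)
    (anchor : K → S × A) (lam : S → A → K → ℝ)
    (hL1 : ∀ s a, ∑ k, |lam s a k| ≤ L)
    (PtK : K → S → ℝ)
    (hKnn : ∀ k s', 0 ≤ PtK k s') (hKsum : ∀ k, ∑ s', PtK k s' = 1)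
    (w : S → A → ℝ) (hw : ∀ s a, |w s a| ≤ 1)
    (u u' : Fin H → ℝ) (h : ℕ) (hh : h < H) :
    ‖(fun x : S × A =>
        QIu (kernelOf lam PtK) r w (uExt u) H h x.1 x.2 -
          QIu (kernelOf lam PtK) r w (uExt u') H h x.1 x.2)‖ ≤
      ((H - h : ℕ) : ℝ) * L ^ (H - h) * ‖u - u'‖ :=
  stmt19_general r L hL H lam hL1 PtK hKnn hKsum w hw u u' h hh
end
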